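/- Let n ≥ 1 and B ≥ 1. For all real numbers x₁,…,xₙ satisfying the constraint (1/n)·Σ_{i=1}^n exp(x_i²/8) ≥ B, the function f(x₁,…,xₙ) = Σ_{i=1}^n (2/3 − x_i²/10)·exp(x_i²/8) satisfies f(x₁,…,xₙ) ≤ n·B·(2/3 − (4/5)·ln B); the maximum is attained when x_i = √(8·ln B) for all i. -/

import Mathlib

/-!
Substituting `yᵢ = exp (xᵢ² / 8)` turns `f` into `∑ᵢ g yᵢ` with `g y = (2/3 - (4/5) log y) · y`,
a concave function whose tangent at `B` has slope `-2/15 - (4/5) log B ≤ 0`. Bounding each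
`g yᵢ` by this tangent and using `∑ᵢ yᵢ ≥ n B` gives `f ≤ n g B`.
-/

open Finset Real

lemma sub_mul_log_mul_le_tangent {a b B y : ℝ} (hb : 0 ≤ b) (hB : 0 < B) (hy : 0 < y) :
    (a - b * log y) * y ≤ (a - b * log B) * B + (a - b - b * log B) * (y - B) := by
  have hlog : y * log (B / y) ≤ B - y := by
    calc y * log (B / y) ≤ y * (B / y - 1) :=
          mul_le_mul_of_nonneg_left (log_le_sub_one_of_pos (by positivity)) hy.le
      _ = B - y := by field_simp
  rw [log_div hB.ne' hy.ne'] at hlog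
  nlinarith

lemma sum_le_card_mul_of_le_tangent {ι : Type*} (s : Finset ι) (g y : ι → ℝ) {c m B : ℝ}
    (hm : m ≤ 0) (hg : ∀ i ∈ s, g i ≤ c + m * (y i - B)) (hy : #s * B ≤ ∑ i ∈ s, y i) :
    ∑ i ∈ s, g i ≤ #s * c := by
  calc ∑ i ∈ s, g i ≤ ∑ i ∈ s, (c + m * (y i - B)) := sum_le_sum hg
    _ = #s * c + m * (∑ i ∈ s, y i - #s * B) := by
        rw [sum_add_distrib, ← mul_sum, sum_sub_distrib]
        simp
    _ ≤ #s * c := by nlinarith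

theorem constrained_potential_maximization
    (n : ℕ) (hn : 1 ≤ n) (B : ℝ) (hB : 1 ≤ B) :
    (∀ x : Fin n → ℝ,
      (1 / (n : ℝ)) * ∑ i, Real.exp ((x i) ^ 2 / 8) ≥ B →
      ∑ i, (2 / 3 - (x i) ^ 2 / 10) * Real.exp ((x i) ^ 2 / 8) ≤
        n * B * (2 / 3 - (4 / 5) * Real.log B)) ∧
    (∀ x : Fin n → ℝ, (∀ i, x i = Real.sqrt (8 * Real.log B)) →
      (1 / (n : ℝ)) * ∑ i, Real.exp ((x i) ^ 2 / 8) ≥ B ∧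
      ∑ i, (2 / 3 - (x i) ^ 2 / 10) * Real.exp ((x i) ^ 2 / 8) =
        n * B * (2 / 3 - (4 / 5) * Real.log B)) := by
  have hn : (0 : ℝ) < n := by exact_mod_cast hn
  have hlogB : 0 ≤ log B := log_nonneg hB
  constructor
  · intro x hx
    have hsum : #(univ : Finset (Fin n)) * B ≤ ∑ i, exp (x i ^ 2 / 8) := by
      rw [ge_iff_le, one_div, inv_mul_eq_div, le_div_iff₀ hn] at hx
      simpa [mul_comm] using hx
    have htangent : ∀ i ∈ univ, (2 / 3 - x i ^ 2 / 10) * exp (x i ^ 2 / 8) ≤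
        (2 / 3 - 4 / 5 * log B) * B + (2 / 3 - 4 / 5 - 4 / 5 * log B) * (exp (x i ^ 2 / 8) - B) := by
      intro i _
      have h := sub_mul_log_mul_le_tangent (a := 2 / 3) (b := 4 / 5) (B := B) (by norm_num)
        (by linarith)
        (exp_pos (x i ^ 2 / 8))
      rw [log_exp] at h
      convert h using 2
      ring
    calc _ ≤ #(univ : Finset (Fin n)) * ((2 / 3 - 4 / 5 * log B) * B) :=
          sum_le_card_mul_of_le_tangent univ _ _ (by linarith) htangent hsum
      _ = n * B * (2 / 3 - 4 / 5 * log B) := by simp only [card_univ, Fintype.card_fin]; ring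
  · intro x hx
    have hsq : ∀ i, x i ^ 2 = 8 * log B := fun i => by
      rw [hx i, sq_sqrt (by positivity)]
    simp only [hsq, mul_div_cancel_left₀ _ (by norm_num : (8 : ℝ) ≠ 0), exp_log (by linarith : 0 < B),
      sum_const, card_univ, Fintype.card_fin, nsmul_eq_mul]
    constructor
    · rw [one_div, inv_mul_cancel_left₀ hn.ne']
    · ring
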